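/- For every even n ≥ 10 there exists an n-vertex conjugated unicyclic graph G with τ(G) = 7n/2 − 3; hence the lower bound 7n/2 − 3 for the total-eccentricity index of n-vertex conjugated unicyclic graphs is attained. (Such a graph U̅_1 is obtained from the spider with center v and n/2 legs, of which n/2 − 1 legs have length 2 and one leg has length 1, by adding an edge between v and one vertex at distance 2 from v.) -/

import Mathlib

open SimpleGraph Finset

/-- The eccentricity of a vertex `v` in a graph `G`: the maximum distance from `v`
to any vertex of `G`. -/
noncomputable def ecc {V : Type} [Fintype V] (G : SimpleGraph V) (v : V) : ℕ :=
  Finset.univ.sup fun w => G.dist v w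

/-- The total-eccentricity index `τ(G) = ∑_{v ∈ V(G)} e_G(v)`. -/
noncomputable def totalEcc {V : Type} [Fintype V] (G : SimpleGraph V) : ℕ :=
  ∑ v : V, ecc G v

/-!
Label the vertices of `U̅₁` by `0, …, n - 1`: the centre is `0`, the legs are `0 – 1` and
`0 – 2i – (2i+1)` for `1 ≤ i < n/2`, and the chord joins `0` to `3`. Every vertex has
eccentricity `depth v + 2`, where `depth v` is its distance to the centre: the upper bound goes
through the centre, and the lower bound is witnessed by a leaf `y ∉ {v, v + 1}` at the end of a
leg of length two, via the lower bound `dist u y ≥ φ u` for any `φ` with `φ y = 0` that grows by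
at most one along edges. The `n/2 - 2` leaves of depth two and the `n/2 + 1` vertices of depth one
give `τ = 2n + (3n/2 - 3)`. The pairs `{2i, 2i+1}` form a perfect matching, and choosing a parent
for every vertex (the chord being the parent edge of the centre) puts the edges in bijection with
the vertices.
-/

namespace SimpleGraph

variable {V : Type*} {G : SimpleGraph V}

theorem Walk.le_add_length_of_forall_adj_le (φ : V → ℕ) (hφ : ∀ a b, G.Adj a b → φ a ≤ φ b + 1)
    {u v : V} (p : G.Walk u v) : φ u ≤ φ v + p.length := by
  induction p with
  | nil => simp
  | cons h _ ih => have := hφ _ _ h; rw [Walk.length_cons]; omega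

theorem Reachable.le_add_dist_of_forall_adj_le (φ : V → ℕ)
    (hφ : ∀ a b, G.Adj a b → φ a ≤ φ b + 1) {u v : V} (h : G.Reachable u v) :
    φ u ≤ φ v + G.dist u v := by
  obtain ⟨p, hp⟩ := h.exists_walk_length_eq_dist
  exact hp ▸ p.le_add_length_of_forall_adj_le φ hφ

theorem exists_isPerfectMatching_of_involutive (σ : V → V) (hσ : Function.Involutive σ)
    (hadj : ∀ v, G.Adj v (σ v)) : ∃ M : G.Subgraph, M.IsPerfectMatching := by
  refine ⟨{ verts := Set.univ
            Adj := fun a b => b = σ a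
            adj_sub := fun h => h ▸ hadj _
            edge_vert := fun _ => Set.mem_univ _
            symm := ⟨fun a b h => by rw [h, hσ a]⟩ }, ?_⟩
  rw [Subgraph.isPerfectMatching_iff]
  exact fun v => ⟨σ v, rfl, fun _ h => h⟩

theorem ncard_edgeSet_fromRel_eq_apply (p : V → V) (hp : ∀ v, p (p v) ≠ v) :
    (fromRel fun a b => a = p b).edgeSet.ncard = Nat.card V := by
  have hfix : ∀ v, p v ≠ v := fun v h => hp v (by rw [h, h])
  have hrange : (fromRel fun a b => a = p b).edgeSet = Set.range fun v => s(v, p v) := by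
    ext e
    induction e using Sym2.ind with
    | _ a b =>
      simp only [mem_edgeSet, fromRel_adj, Set.mem_range, Sym2.eq_iff]
      constructor
      · rintro ⟨-, rfl | rfl⟩
        exacts [⟨b, Or.inr ⟨rfl, rfl⟩⟩, ⟨a, Or.inl ⟨rfl, rfl⟩⟩]
      · rintro ⟨v, ⟨rfl, rfl⟩ | ⟨rfl, rfl⟩⟩
        exacts [⟨(hfix v ·.symm), Or.inr rfl⟩, ⟨hfix v, Or.inl rfl⟩]
  rw [hrange, Set.ncard_range_of_injective]
  intro v w h
  rcases Sym2.eq_iff.mp h with ⟨hvw, -⟩ | ⟨hv, hw⟩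
  exacts [hvw, absurd (by rw [← hv, hw]) (hp w)]

end SimpleGraph

namespace SpiderWithChord

def parent (m : ℕ) : ℕ := if m = 0 then 3 else if m % 2 = 1 ∧ 3 ≤ m then m - 1 else 0

def depth (m : ℕ) : ℕ := if m = 0 then 0 else if m % 2 = 1 ∧ 5 ≤ m then 2 else 1

variable {n : ℕ} (hn : 4 ≤ n)

def parentFin (v : Fin n) : Fin n :=
  ⟨parent v, by unfold parent; split_ifs <;> omega⟩

def graph : SimpleGraph (Fin n) := fromRel fun a b => a = parentFin hn b

def center : Fin n := ⟨0, by omega⟩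

variable {hn}

theorem adj_iff {a b : Fin n} :
    (graph hn).Adj a b ↔ (a : ℕ) ≠ b ∧ ((a : ℕ) = parent b ∨ (b : ℕ) = parent a) := by
  simp only [graph, fromRel_adj, parentFin, ne_eq, Fin.ext_iff]

theorem adj_center_of_depth_eq_one {v : Fin n} (hv : depth v = 1) :
    (graph hn).Adj v (center hn) := by
  rw [adj_iff]
  unfold depth parent at *
  simp only [center]
  split_ifs at * <;> omega

theorem exists_walk_center (v : Fin n) :
    ∃ p : (graph hn).Walk v (center hn), p.length = depth v := by
  by_cases h0 : (v : ℕ) = 0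
  · obtain rfl : v = center hn := Fin.ext h0
    exact ⟨.nil, rfl⟩
  by_cases h1 : depth v = 1
  · exact ⟨(adj_center_of_depth_eq_one h1).toWalk, by simp [h1]⟩
  have hv : (v : ℕ) % 2 = 1 ∧ 5 ≤ (v : ℕ) := by unfold depth at h1; split_ifs at h1 <;> omega
  let w : Fin n := ⟨v - 1, by omega⟩
  have hvw : (graph hn).Adj v w := by
    rw [adj_iff]; unfold parent; simp only [w]; split_ifs <;> omega
  have hw : depth w = 1 := by unfold depth; simp only [w]; split_ifs <;> omega
  refine ⟨Walk.cons hvw (adj_center_of_depth_eq_one hw).toWalk, ?_⟩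
  show 2 = depth v
  unfold depth; rw [if_neg h0, if_pos hv]

theorem connected : (graph hn).Connected := by
  refine (connected_iff_exists_forall_reachable _).2 ⟨center hn, fun v => ?_⟩
  obtain ⟨p, -⟩ := exists_walk_center (hn := hn) v
  exact p.reverse.reachable

theorem dist_center_le (v : Fin n) : (graph hn).dist v (center hn) ≤ depth v := by
  obtain ⟨p, hp⟩ := exists_walk_center (hn := hn) v
  exact hp ▸ dist_le p

/-- The distance from `m` to the leaf `y`, for odd `y ≥ 5`. -/
def depthFrom (y m : ℕ) : ℕ := if m = y then 0 else if m + 1 = y then 1 else depth m + 2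

theorem depthFrom_le_depthFrom_add_one_of_adj {y : ℕ} (hy : y % 2 = 1 ∧ 5 ≤ y) {a b : Fin n}
    (h : (graph hn).Adj a b) : depthFrom y a ≤ depthFrom y b + 1 := by
  rw [adj_iff] at h
  unfold depthFrom depth parent at *
  split_ifs at * <;> omega

theorem ecc_eq (h8 : 8 ≤ n) (v : Fin n) : ecc (graph hn) v = depth v + 2 := by
  refine le_antisymm (Finset.sup_le fun w _ => ?_) ?_
  · have hw : depth w ≤ 2 := by unfold depth; split_ifs <;> omega
    calc (graph hn).dist v w
        ≤ (graph hn).dist v (center hn) + (graph hn).dist (center hn) w :=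
          connected.dist_triangle
      _ ≤ depth v + depth w := by
          rw [dist_comm (u := center hn)]
          exact add_le_add (dist_center_le v) (dist_center_le w)
      _ ≤ depth v + 2 := by omega
  · obtain ⟨y, hyn, hy, hvy⟩ : ∃ y, y < n ∧ (y % 2 = 1 ∧ 5 ≤ y) ∧ (v : ℕ) ≠ y ∧ (v : ℕ) + 1 ≠ y :=
      if hv : (v : ℕ) = 4 ∨ (v : ℕ) = 5 then ⟨7, by omega⟩ else ⟨5, by omega⟩
    have hdist := (connected (hn := hn) v ⟨y, hyn⟩).le_add_dist_of_forall_adj_le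
      (fun m : Fin n => depthFrom y m) fun a b => depthFrom_le_depthFrom_add_one_of_adj hy
    calc depth v + 2 = depthFrom y v := by unfold depthFrom; rw [if_neg hvy.1, if_neg hvy.2]
      _ ≤ (graph hn).dist v ⟨y, hyn⟩ := by simpa [depthFrom] using hdist
      _ ≤ ecc (graph hn) v := Finset.le_sup (f := fun w => (graph hn).dist v w) (mem_univ _)

theorem parent_parent_ne (m : ℕ) : parent (parent m) ≠ m := by
  unfold parent; split_ifs <;> omega

theorem ncard_edgeSet : (graph hn).edgeSet.ncard = n := by
  rw [graph, ncard_edgeSet_fromRel_eq_apply (parentFin hn)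
    fun v h => parent_parent_ne v (congrArg Fin.val h), Nat.card_eq_fintype_card, Fintype.card_fin]

def partner (m : ℕ) : ℕ := if m % 2 = 0 then m + 1 else m - 1

theorem exists_isPerfectMatching (hev : Even n) :
    ∃ M : (graph hn).Subgraph, M.IsPerfectMatching := by
  obtain ⟨k, hk⟩ := hev
  refine exists_isPerfectMatching_of_involutive
    (fun v => ⟨partner v, by have := v.isLt; unfold partner; split_ifs <;> omega⟩)
    (fun v => ?_) (fun v => ?_)
  · ext; simp only [partner]; split_ifs <;> omega
  · rw [adj_iff]; simp only [partner, parent]; grind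

theorem sum_range_depth (k : ℕ) : ∑ m ∈ range (2 * k + 4), depth m = 3 * k + 3 := by
  induction k with
  | zero => decide
  | succ k ih =>
    rw [show 2 * (k + 1) + 4 = 2 * k + 4 + 1 + 1 by ring, sum_range_succ, sum_range_succ, ih]
    have h4 : depth (2 * k + 4) = 1 := by unfold depth; split_ifs <;> omega
    have h5 : depth (2 * k + 5) = 2 := by unfold depth; split_ifs <;> omega
    omega

theorem totalEcc_eq (h8 : 8 ≤ n) : totalEcc (graph hn) = ∑ m ∈ range n, (depth m + 2) := by
  rw [totalEcc, ← Fin.sum_univ_eq_sum_range (fun m => depth m + 2)]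
  exact sum_congr rfl fun v _ => ecc_eq h8 v

end SpiderWithChord

theorem conjugated_unicyclic_lower_bound_attained (n : ℕ) (hn : 10 ≤ n) (hev : Even n) :
    ∃ G : SimpleGraph (Fin n), G.Connected ∧ G.edgeSet.ncard = n ∧
      (∃ M : G.Subgraph, M.IsPerfectMatching) ∧
      (totalEcc G : ℚ) = 7 * n / 2 - 3 := by
  have h4 : 4 ≤ n := by omega
  refine ⟨SpiderWithChord.graph h4, SpiderWithChord.connected, SpiderWithChord.ncard_edgeSet,
    SpiderWithChord.exists_isPerfectMatching hev, ?_⟩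
  obtain ⟨k, rfl⟩ : ∃ k, n = 2 * k + 4 := by obtain ⟨j, hj⟩ := hev; exact ⟨j - 2, by omega⟩
  rw [SpiderWithChord.totalEcc_eq (by omega), sum_add_distrib, SpiderWithChord.sum_range_depth,
    sum_const, card_range, smul_eq_mul]
  push_cast
  ring
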